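/- Let n ≥ 1 and let o : ℚⁿ → ℚⁿ be a vector of operators, each component being a max-plus, min-plus, or affine weighted-average operator with rational constants and positive rational weights. If the system x ≤ o(x) + ε·𝟙 has a solution x ∈ ℚⁿ for every rational ε > 0, and each solution can be chosen as a function of ε that is piecewise linear in ε near 0, then the system x ≤ o(x) has a solution x ∈ ℚⁿ. -/
import Mathlib


/-- The class `𝒪_n` of max-plus, min-plus and affine weighted-average operators
on `ℚⁿ`. -/
def IsOpQ (n : ℕ) (f : (Fin n → ℚ) → ℚ) : Prop :=
  (∃ (m : ℕ) (j : Fin (m + 1) → Fin n) (k : Fin (m + 1) → ℚ),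
      ∀ x, f x = Finset.univ.sup' Finset.univ_nonempty (fun l => x (j l) + k l)) ∨
  (∃ (m : ℕ) (j : Fin (m + 1) → Fin n) (k : Fin (m + 1) → ℚ),
      ∀ x, f x = Finset.univ.inf' Finset.univ_nonempty (fun l => x (j l) + k l)) ∨
  (∃ (m : ℕ) (j : Fin (m + 1) → Fin n) (α : Fin (m + 1) → ℚ) (k : ℚ),
      (∀ l, 0 < α l) ∧
      ∀ x, f x = (∑ l, α l * x (j l)) / (∑ l, α l) + k)

lemma IsOpQ.mono_shift {n : ℕ} {f : (Fin n → ℚ) → ℚ} (hf : IsOpQ n f)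
    (y z : Fin n → ℚ) (c : ℚ) (h : ∀ j, y j ≤ z j + c) : f y ≤ f z + c := by
  rcases hf with ⟨m, j, k, hfx⟩ | ⟨m, j, k, hfx⟩ | ⟨m, j, α, k, hα, hfx⟩
  · rw [hfx, hfx]
    apply Finset.sup'_le
    intro l _
    have h1 : y (j l) + k l ≤ (z (j l) + k l) + c := by linarith [h (j l)]
    refine h1.trans ?_
    have := Finset.le_sup' (fun l => z (j l) + k l) (Finset.mem_univ l)
    linarith
  · rw [hfx, hfx]
    obtain ⟨l, _, hl⟩ := Finset.exists_mem_eq_inf' Finset.univ_nonempty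
      (fun l => z (j l) + k l)
    rw [hl]
    have := Finset.inf'_le (fun l => y (j l) + k l) (Finset.mem_univ l)
    have h1 := h (j l)
    linarith
  · rw [hfx, hfx]
    have hS : 0 < ∑ l, α l := Finset.sum_pos (fun l _ => hα l) Finset.univ_nonempty
    have hsum : (∑ l, α l * y (j l)) ≤ (∑ l, α l * z (j l)) + c * ∑ l, α l := by
      rw [Finset.mul_sum, ← Finset.sum_add_distrib]
      apply Finset.sum_le_sum
      intro l _
      have := h (j l)
      nlinarith [hα l]
    have h4 : (∑ l, α l * y (j l)) / (∑ l, α l) ≤ (∑ l, α l * z (j l)) / (∑ l, α l) + c := by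
      rw [div_add' _ _ _ hS.ne', div_le_div_iff_of_pos_right hS]
      linarith
    linarith

/-- If `x ≤ o(x) + ε·𝟙` is solvable for every `ε > 0`, by a choice of solutions which
is linear in `ε` near `0`, then `x ≤ o(x)` is solvable. -/
theorem stmt1 (n : ℕ) (hn : 1 ≤ n)
    (o : Fin n → (Fin n → ℚ) → ℚ) (ho : ∀ i, IsOpQ n (o i))
    (x : ℚ → Fin n → ℚ)
    (hx : ∀ ε : ℚ, 0 < ε → ∀ i, x ε i ≤ o i (x ε) + ε)
    (a b : Fin n → ℚ) (t₁ : ℚ) (ht₁ : 0 < t₁)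
    (hlin : ∀ ε : ℚ, 0 < ε → ε ≤ t₁ → ∀ i, x ε i = a i + b i * ε) :
    ∃ z : Fin n → ℚ, ∀ i, z i ≤ o i z := by
  refine ⟨a, fun i => ?_⟩
  set M : ℚ := ∑ j, |b j| with hM
  have hM0 : 0 ≤ M := Finset.sum_nonneg fun j _ => abs_nonneg _
  have hbM : ∀ j, |b j| ≤ M :=
    fun j => Finset.single_le_sum (f := fun j => |b j|) (fun j _ => abs_nonneg _)
      (Finset.mem_univ j)
  set C : ℚ := 2 * M + 1 with hC
  have hC0 : 0 < C := by linarith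
  -- key estimate
  have key : ∀ ε : ℚ, 0 < ε → ε ≤ t₁ → a i ≤ o i a + C * ε := by
    intro ε hε hεt
    have hxe := hx ε hε i
    have hle : ∀ j, x ε j ≤ a j + M * ε := by
      intro j
      rw [hlin ε hε hεt j]
      have := hbM j
      have h1 : b j ≤ |b j| := le_abs_self _
      nlinarith
    have hmono := (ho i).mono_shift (x ε) a (M * ε) hle
    have hxi : a i + b i * ε = x ε i := (hlin ε hε hεt i).symm
    have h2 : -(|b i|) ≤ b i := neg_abs_le _
    have := hbM i
    nlinarith
  -- conclude by letting ε → 0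
  by_contra hcon
  push_neg at hcon
  set d : ℚ := a i - o i a with hd
  have hd0 : 0 < d := by simp [hd]; linarith
  set ε : ℚ := min t₁ (d / (2 * C)) with hε
  have hε0 : 0 < ε := lt_min ht₁ (by positivity)
  have hεt : ε ≤ t₁ := min_le_left _ _
  have h1 := key ε hε0 hεt
  have h2 : ε ≤ d / (2 * C) := min_le_right _ _
  have h3 : C * ε ≤ d / 2 := by
    rw [le_div_iff₀ (by norm_num : (0:ℚ) < 2)]
    calc C * ε * 2 ≤ C * (d / (2 * C)) * 2 := by nlinarith
    _ = d := by field_simp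
  have hd' : d = a i - o i a := hd
  clear_value d ε C M
  linarith [h1, h3, hd0, hd']
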